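/- Let F : P → α be a function on a finite nonempty set of paths P, and let F''(p) = (F'(p), F(p)) for some F' : P → β with a linear order on β. Define R'((a,b),(a',b')) to return (a,b) if min(a,a') = a and (a',b') otherwise. Then the second component of the fold of R' over the image of F'' on P (in any order, assuming all F' values are distinct) equals F applied to the argmin of F' over P. -/
import Mathlib

lemma fmred_aux {π α β : Type*} [LinearOrder β]
    (F : π → α) (F' : π → β)
    (R' : β × α → β × α → β × α)
    (hR' : ∀ x y : β × α, R' x y = if min x.1 y.1 = x.1 then x else y) :
    ∀ (l : List π) (x : π), ∃ m, (m = x ∨ m ∈ l) ∧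
      ((l.map (fun p => (F' p, F p))).foldl R' (F' x, F x)) = (F' m, F m) ∧
      (F' m ≤ F' x ∧ ∀ r ∈ l, F' m ≤ F' r) := by
  intro l
  induction l with
  | nil => intro x; exact ⟨x, Or.inl rfl, rfl, le_refl _, by simp⟩
  | cons y t ih =>
    intro x
    simp only [List.map_cons, List.foldl_cons]
    rw [hR']
    by_cases h : min (F' x) (F' y) = F' x
    · simp only [h, if_pos rfl]
      obtain ⟨m, hm, heq, hle, hall⟩ := ih x
      refine ⟨m, ?_, heq, hle, ?_⟩
      · rcases hm with h' | h' <;> simp [h']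
      · intro r hr
        rcases List.mem_cons.mp hr with h' | h'
        · exact h' ▸ hle.trans (h ▸ min_le_right _ _)
        · exact hall r h'
    · simp only [if_neg h]
      obtain ⟨m, hm, heq, hle, hall⟩ := ih y
      refine ⟨m, ?_, heq, ?_, ?_⟩
      · rcases hm with h' | h' <;> simp [h']
      · exact hle.trans (le_of_not_ge (fun hxy => h (min_eq_left hxy)))
      · intro r hr
        rcases List.mem_cons.mp hr with h' | h'
        · exact h' ▸ hle
        · exact hall r h'

/-- FMRed: `F` applied to the argmin of `F'` over a nonempty finite set of paths `P`
can be computed by a single fold carrying pairs `(F' p, F p)`, in any enumeration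
order of `P`, assuming the values of `F'` on `P` are distinct. -/
theorem stmt_1 {π α β : Type*} [LinearOrder β]
    (P : Finset π) (hP : P.Nonempty)
    (F : π → α) (F' : π → β) (hinj : Set.InjOn F' ↑P)
    (R' : β × α → β × α → β × α)
    (hR' : ∀ x y : β × α, R' x y = if min x.1 y.1 = x.1 then x else y)
    (p₀ : π) (hp₀ : p₀ ∈ P) (hmin : ∀ q ∈ P, F' p₀ ≤ F' q)
    (x : π) (l : List π) (hperm : (x :: l).Perm P.toList) :
    ((l.map (fun p => (F' p, F p))).foldl R' (F' x, F x)).2 = F p₀ := by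
  obtain ⟨m, hm, heq, hle, hall⟩ := fmred_aux F F' R' hR' l x
  have hmemP : ∀ p, p ∈ (x :: l) → p ∈ P := by
    intro p hp
    have := hperm.mem_iff.mp hp
    simpa [Finset.mem_toList] using this
  have hmP : m ∈ P := hmemP m (by rcases hm with h | h <;> simp [h])
  have hp₀m : F' p₀ ≤ F' m := hmin m hmP
  have hmp₀ : F' m ≤ F' p₀ := by
    have : p₀ ∈ (x :: l) := hperm.mem_iff.mpr (by simpa [Finset.mem_toList] using hp₀)
    rcases List.mem_cons.mp this with h | h
    · exact h ▸ hle
    · exact hall p₀ h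
  have : m = p₀ := hinj hmP hp₀ (le_antisymm hmp₀ hp₀m)
  rw [heq, this]
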